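/- arXiv:0807.1347 — 3 statements merged into one kernel-verified Lean document; each statement's English description precedes it below -/
import Mathlib

section
/- For every even integer k ≥ 4, the numerator N_k of the Bernoulli number B_k satisfies |N_k| < 2^β, where β = ⌈(k + 0.5)·log₂ k − 4.094·k + 2.470 + log₂ D_k⌉ and D_k is the (positive) denominator of B_k in lowest terms. -/
/-!
Euler's formula gives `|B_{2m}| = 2 (2m)! ζ(2m) / (2π)^{2m}`. For `2m ≥ 6` we bound
`ζ(2m) ≤ ζ(6) = π^6/945`, and `(2m)! ≤ s₆ √(4m) (2m/e)^{2m}` because the Stirling sequence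
`sₙ = n! / (√(2n) (n/e)^n)` is decreasing. Since `2^4.094 < 2πe` and `2 s₆ √2 ζ(6) < 5.2 < 2^2.47`,
this yields `|B_k| < 2^((k + 1/2) log₂ k - 4.094 k + 2.47)`; the case `k = 4` is checked from
`B_4 = -1/30`. Multiplying by `D_k` gives the bound on `|N_k| = |B_k| D_k`.
-/

open Real Stirling
open scoped Nat

theorem bernoulli'_six : bernoulli' 6 = 1 / 42 := by
  rw [bernoulli'_def]
  norm_num [Finset.sum_range_succ, Nat.choose, bernoulli'_eq_zero_of_odd (n := 5) ⟨2, rfl⟩]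

theorem hasSum_zeta_six : HasSum (fun n : ℕ => (1 : ℝ) / (n : ℝ) ^ 6) (π ^ 6 / 945) := by
  convert hasSum_zeta_nat (k := 3) (by norm_num) using 1
  rw [bernoulli_eq_bernoulli'_of_ne_one (by norm_num), bernoulli'_six]
  norm_num [Nat.factorial]
  ring

theorem tsum_one_div_pow_le_zeta_six {p : ℕ} (hp : 6 ≤ p) :
    ∑' n : ℕ, 1 / (n : ℝ) ^ p ≤ π ^ 6 / 945 := by
  refine hasSum_le (fun n => ?_) (summable_one_div_nat_pow.mpr (by omega)).hasSum hasSum_zeta_six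
  rcases n.eq_zero_or_pos with rfl | hn
  · simp [zero_pow (by omega : p ≠ 0)]
  · exact one_div_pow_le_one_div_pow_of_le (by exact_mod_cast hn) hp

theorem abs_bernoulli_two_mul {m : ℕ} (hm : m ≠ 0) :
    |(bernoulli (2 * m) : ℝ)|
      = 2 * (2 * m)! * (∑' n : ℕ, 1 / (n : ℝ) ^ (2 * m)) / (2 * π) ^ (2 * m) := by
  have hζ := hasSum_zeta_nat hm
  rw [hζ.tsum_eq, ← abs_of_nonneg (hζ.nonneg fun n => by positivity)]
  simp only [abs_div, abs_mul, abs_pow, abs_neg, abs_one, one_pow, one_mul, abs_two,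
    abs_of_pos pi_pos, Nat.abs_cast]
  rw [mul_pow, ← mul_pow_sub_one (by omega : 2 * m ≠ 0) (2 : ℝ)]
  field_simp

theorem factorial_le_stirlingSeq_mul {m n : ℕ} (hm : m ≠ 0) (hmn : m ≤ n) :
    (n ! : ℝ) ≤ stirlingSeq m * (√(2 * n) * (n / exp 1) ^ n) := by
  have hn : n ≠ 0 := by omega
  rw [← div_le_iff₀ (by positivity)]
  obtain ⟨m, rfl⟩ := Nat.exists_eq_succ_of_ne_zero hm
  obtain ⟨n, rfl⟩ := Nat.exists_eq_succ_of_ne_zero hn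
  exact stirlingSeq'_antitone (by omega : m ≤ n)

theorem stirlingSeq_six_le : stirlingSeq 6 ≤ 1.798 := by
  have he : (6 : ℝ) / 2.7182819 ≤ 6 / exp 1 :=
    div_le_div_of_nonneg_left (by norm_num) (exp_pos 1) (by linarith [exp_one_lt_d9])
  have h12 : (3.4641 : ℝ) ≤ √12 := (le_sqrt (by norm_num) (by norm_num)).mpr (by norm_num)
  have hden : 3.4641 * (6 / 2.7182819) ^ 6 ≤ √12 * (6 / exp 1) ^ 6 := by gcongr
  rw [stirlingSeq, div_le_iff₀ (by positivity)]
  norm_num [Nat.factorial] at hden ⊢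
  linarith

theorem rpow_pow_of_mul_eq {b x : ℝ} (hb : 0 ≤ b) {n N : ℕ} (h : x * n = N) :
    (b ^ x) ^ n = b ^ N := by
  rw [← rpow_natCast, ← rpow_mul hb, h, rpow_natCast]

theorem two_rpow_le_two_mul_pi_mul_exp_one : (2 : ℝ) ^ (4.094 : ℝ) ≤ 2 * π * exp 1 := by
  have h : (2 : ℝ) ^ (4.094 : ℝ) ≤ 8539 / 500 := by
    rw [← pow_le_pow_iff_left₀ (by positivity) (by norm_num) (by norm_num : (500 : ℕ) ≠ 0),
      rpow_pow_of_mul_eq zero_le_two (N := 2047) (by norm_num), div_pow,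
      le_div_iff₀ (by positivity)]
    exact_mod_cast (by decide +kernel : 2 ^ 2047 * 500 ^ 500 ≤ 8539 ^ 500)
  nlinarith [pi_gt_d6, exp_one_gt_d9]

theorem five_point_two_lt_two_rpow : (5.2 : ℝ) < 2 ^ (2.47 : ℝ) := by
  rw [← pow_lt_pow_iff_left₀ (by norm_num) (by positivity) (by norm_num : (100 : ℕ) ≠ 0),
    rpow_pow_of_mul_eq zero_le_two (N := 247) (by norm_num)]
  norm_num

theorem one_div_thirty_lt_two_rpow : (1 / 30 : ℝ) < 2 ^ (-4.906 : ℝ) := by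
  rw [rpow_neg zero_le_two, one_div, inv_lt_inv₀ (by norm_num) (by positivity),
    ← pow_lt_pow_iff_left₀ (by positivity) (by norm_num) (by norm_num : (500 : ℕ) ≠ 0),
    rpow_pow_of_mul_eq zero_le_two (N := 2453) (by norm_num)]
  exact_mod_cast (by decide +kernel : 2 ^ 2453 < 30 ^ 500)

theorem two_mul_stirlingSeq_six_mul_sqrt_two_mul_zeta_six_lt :
    2 * stirlingSeq 6 * √2 * (π ^ 6 / 945) < 2 ^ (2.47 : ℝ) := by
  have hs : stirlingSeq 6 ≤ 1.798 := stirlingSeq_six_le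
  have h2 : √2 ≤ 1.41422 := (sqrt_le_left (by norm_num)).mpr (by norm_num)
  have hπ : π ^ 6 ≤ 3.141593 ^ 6 := by gcongr; exact pi_lt_d6.le
  calc 2 * stirlingSeq 6 * √2 * (π ^ 6 / 945) ≤ 2 * 1.798 * 1.41422 * (3.141593 ^ 6 / 945) := by
        gcongr
    _ < 5.2 := by norm_num
    _ < 2 ^ (2.47 : ℝ) := five_point_two_lt_two_rpow

theorem abs_bernoulli_two_mul_lt {m : ℕ} (hm : 3 ≤ m) :
    |(bernoulli (2 * m) : ℝ)|
      < ((2 * m : ℕ) : ℝ) ^ (2 * m) * √((2 * m : ℕ) : ℝ) * 2 ^ (2.47 : ℝ)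
        / (2 ^ (4.094 : ℝ)) ^ (2 * m) := by
  set n := 2 * m
  have hfac : (n ! : ℝ) ≤ stirlingSeq 6 * (√(2 * n) * (n / exp 1) ^ n) :=
    factorial_le_stirlingSeq_mul (by norm_num) (by omega)
  have hζ : ∑' k : ℕ, 1 / (k : ℝ) ^ n ≤ π ^ 6 / 945 := tsum_one_div_pow_le_zeta_six (by omega)
  have hs0 : 0 < stirlingSeq 6 := stirlingSeq'_pos 5
  rw [abs_bernoulli_two_mul (by omega)]
  calc (2 * n ! * ∑' k : ℕ, 1 / (k : ℝ) ^ n) / (2 * π) ^ n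
      ≤ 2 * (stirlingSeq 6 * (√(2 * n) * (n / exp 1) ^ n)) * (π ^ 6 / 945) / (2 * π) ^ n := by
        gcongr
    _ = 2 * stirlingSeq 6 * √2 * (π ^ 6 / 945) * ((n : ℝ) ^ n * √n / (2 * π * exp 1) ^ n) := by
        rw [sqrt_mul zero_le_two, div_pow, mul_pow (2 * π)]
        field_simp
    _ ≤ 2 * stirlingSeq 6 * √2 * (π ^ 6 / 945) * ((n : ℝ) ^ n * √n / (2 ^ (4.094 : ℝ)) ^ n) := by
        gcongr
        exact two_rpow_le_two_mul_pi_mul_exp_one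
    _ < 2 ^ (2.47 : ℝ) * ((n : ℝ) ^ n * √n / (2 ^ (4.094 : ℝ)) ^ n) := by
        gcongr
        exact two_mul_stirlingSeq_six_mul_sqrt_two_mul_zeta_six_lt
    _ = _ := by ring

theorem two_rpow_add_half_mul_logb_eq {k : ℕ} (hk : 0 < k) :
    (2 : ℝ) ^ (((k : ℝ) + 0.5) * logb 2 k - 4.094 * k + 2.470)
      = (k : ℝ) ^ k * √k * 2 ^ (2.47 : ℝ) / (2 ^ (4.094 : ℝ)) ^ k := by
  have hk0 : (0 : ℝ) < k := by exact_mod_cast hk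
  rw [rpow_add two_pos, rpow_sub two_pos, mul_comm _ (logb 2 _), rpow_mul zero_le_two,
    rpow_logb two_pos (by norm_num) hk0, show (0.5 : ℝ) = 1 / 2 by norm_num, rpow_add hk0,
    rpow_natCast, ← sqrt_eq_rpow, rpow_mul zero_le_two, rpow_natCast]
  norm_num
  ring

theorem abs_bernoulli_lt_two_rpow {k : ℕ} (hk : 4 ≤ k) (he : Even k) :
    |(bernoulli k : ℝ)| < 2 ^ (((k : ℝ) + 0.5) * logb 2 k - 4.094 * k + 2.470) := by
  obtain ⟨m, rfl⟩ := he
  rw [← two_mul]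
  rcases (show m = 2 ∨ 3 ≤ m by omega) with rfl | hm
  · have hB : bernoulli 4 = -1 / 30 := by
      rw [bernoulli_eq_bernoulli'_of_ne_one (by norm_num), bernoulli'_four]
    have hlog : logb 2 (4 : ℝ) = 2 := by
      rw [show (4 : ℝ) = 2 ^ (2 : ℝ) by norm_num, logb_rpow two_pos (by norm_num)]
    convert one_div_thirty_lt_two_rpow using 2 <;> norm_num [hB, hlog]
  · rw [two_rpow_add_half_mul_logb_eq (by omega)]
    exact_mod_cast abs_bernoulli_two_mul_lt hm

theorem Rat.abs_num_eq_abs_mul_den {K : Type*} [Field K] [LinearOrder K] [IsStrictOrderedRing K]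
    (q : ℚ) : (|q.num| : K) = |(q : K)| * q.den := by
  rw [Rat.cast_def, abs_div, Nat.abs_cast, div_mul_cancel₀ _ (by positivity)]

theorem bernoulli_num_bound (k : ℕ) (hk : 4 ≤ k) (hke : Even k)
    (β : ℤ)
    (hβ : β = ⌈((k : ℝ) + 0.5) * Real.logb 2 k - 4.094 * k + 2.470
      + Real.logb 2 ((bernoulli k).den : ℝ)⌉) :
    (|(bernoulli k).num| : ℝ) < 2 ^ (β : ℝ) := by
  have hden : (0 : ℝ) < (bernoulli k).den := by exact_mod_cast (bernoulli k).pos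
  calc (|(bernoulli k).num| : ℝ) = |(bernoulli k : ℝ)| * (bernoulli k).den :=
        Rat.abs_num_eq_abs_mul_den _
    _ < 2 ^ (((k : ℝ) + 0.5) * logb 2 k - 4.094 * k + 2.470) * (bernoulli k).den := by
        gcongr
        exact abs_bernoulli_lt_two_rpow hk hke
    _ = 2 ^ (((k : ℝ) + 0.5) * logb 2 k - 4.094 * k + 2.470 + logb 2 (bernoulli k).den) := by
        rw [rpow_add two_pos _ (logb 2 _), rpow_logb two_pos (by norm_num) hden]
    _ ≤ 2 ^ (β : ℝ) := rpow_le_rpow_of_exponent_le one_le_two (hβ ▸ Int.le_ceil _)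
end

section
/- Let p ≥ 3 be an odd prime, 0 < s < p, and let 0.b₀b₁b₂… be the binary expansion of s/p (b_j ∈ {0,1}). Then for every j ≥ 0, f(2^j s) = (−1)^{b_j}, where f(x) = 1 if 0 < (x mod p) < p/2 and f(x) = −1 if p/2 < (x mod p) < p. -/
/-- `f(x) = 1` if `0 < (x mod p) < p/2`, and `f(x) = -1` if `p/2 < (x mod p) < p`. -/
def ffun (p : ℕ) (x : ℤ) : ℤ :=
  if 2 * (x % (p : ℤ)) < (p : ℤ) then 1 else -1

theorem ffun_eq_binary_digit (p : ℕ) (hp : p.Prime) (hodd : Odd p)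
    (s : ℕ) (hs0 : 0 < s) (hsp : s < p)
    (b : ℕ → ℕ) (hb : ∀ j, b j = 2 ^ (j + 1) * s / p % 2) :
    ∀ j : ℕ, ffun p ((2 : ℤ) ^ j * s) = (-1) ^ b j := by
  intro j
  have hp0 : 0 < p := hp.pos
  set q := 2 ^ j * s / p with hq
  set r := 2 ^ j * s % p with hr
  have hrp : r < p := Nat.mod_lt _ hp0
  have hdecomp : 2 ^ (j + 1) * s = p * (2 * q) + 2 * r := by
    rw [pow_succ, mul_comm (2 ^ j) 2, mul_assoc, ← Nat.div_add_mod (2 ^ j * s) p]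
    ring
  have hdiv : 2 ^ (j + 1) * s / p = 2 * q + 2 * r / p := by
    rw [hdecomp, Nat.mul_add_div hp0]
  have h2r : 2 * r / p = if 2 * r < p then 0 else 1 := by
    by_cases h : 2 * r < p
    · simp [h, Nat.div_eq_of_lt h]
    · simp [h]
      exact Nat.div_eq_of_lt_le (by omega) (by omega)
  have hbj : b j = if 2 * r < p then 0 else 1 := by
    rw [hb j, hdiv, Nat.mul_add_mod, h2r]
    split <;> rfl
  have hcast : ((2 : ℤ) ^ j * s) % (p : ℤ) = (r : ℤ) := by
    rw [hr, Int.natCast_mod]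
    push_cast
    ring_nf
  rw [ffun, hcast, hbj]
  by_cases h : 2 * r < p
  · have h' : 2 * (r : ℤ) < (p : ℤ) := by exact_mod_cast h
    simp [h, h']
  · have h' : ¬ 2 * (r : ℤ) < (p : ℤ) := by exact_mod_cast h
    simp [h, h']
end

section
/- For k ≥ 4 even, define Y = max(37, ⌈(k+0.5)·log₂ k⌉) and M_Y = Π_{p ≤ Y prime, (p−1) ∤ k} p. Assuming Σ_{p ≤ x} log p ≥ 0.73·x for all x ≥ 37, one has log₂ M_Y ≥ (k+0.5)·log₂ k − k − 1. -/
theorem modulus_bound (k : ℕ) (hk : 4 ≤ k) (hke : Even k)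
    (Y : ℕ) (hY : Y = max 37 ⌈((k : ℝ) + 0.5) * Real.logb 2 k⌉₊)
    (MY : ℕ)
    (hMY : MY = ∏ p ∈ (Finset.range (Y + 1)).filter
      (fun p => p.Prime ∧ ¬ (p - 1) ∣ k), p)
    (hPNT : ∀ x : ℝ, 37 ≤ x →
      0.73 * x ≤ ∑ p ∈ (Finset.range (⌊x⌋₊ + 1)).filter Nat.Prime, Real.log p) :
    ((k : ℝ) + 0.5) * Real.logb 2 k - k - 1 ≤ Real.logb 2 MY := by
  have hY37 : 37 ≤ Y := by rw [hY]; exact le_max_left _ _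
  have hk4 : (4 : ℝ) ≤ (k : ℝ) := by exact_mod_cast hk
  have hlogbk : 0 ≤ Real.logb 2 k := Real.logb_nonneg one_lt_two (by linarith)
  set c : ℝ := ((k : ℝ) + 0.5) * Real.logb 2 k with hc
  have hYc : c ≤ (Y : ℝ) := by
    calc c ≤ (⌈c⌉₊ : ℝ) := Nat.le_ceil c
      _ ≤ (Y : ℝ) := by
          have : ⌈c⌉₊ ≤ Y := by rw [hY]; exact le_max_right _ _
          exact_mod_cast this
  set S : Finset ℕ := (Finset.range (Y + 1)).filter Nat.Prime with hS
  set T : Finset ℕ := S.filter (fun p => (p - 1) ∣ k) with hT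
  set P : ℕ := ∏ p ∈ S, p with hP
  set R : ℕ := ∏ p ∈ T, p with hR
  -- split
  have hMY' : MY = ∏ p ∈ S.filter (fun p => ¬ (p - 1) ∣ k), p := by
    rw [hMY, hS, Finset.filter_filter]
  have hsplit : R * MY = P := by
    rw [hMY', hR, hT, hP]
    exact Finset.prod_filter_mul_prod_filter_not S _ _
  -- 2 ∈ T
  have h2T : 2 ∈ T := by
    simp only [hT, hS, Finset.mem_filter, Finset.mem_range]
    exact ⟨⟨by omega, Nat.prime_two⟩, one_dvd _⟩
  have hRsplit : R = 2 * ∏ p ∈ T.erase 2, p := (Finset.mul_prod_erase T _ h2T).symm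
  -- odd part divides 2^k - 1
  have hodd : (∏ p ∈ T.erase 2, p) ∣ 2 ^ k - 1 := by
    apply Finset.prod_primes_dvd
    · intro p hp
      have hpT := (Finset.mem_erase.mp hp).2
      have : p.Prime := (Finset.mem_filter.mp ((Finset.mem_filter.mp hpT).1)).2
      exact this.prime
    · intro p hp
      obtain ⟨hne2, hpT⟩ := Finset.mem_erase.mp hp
      obtain ⟨hpS, hdvd⟩ := Finset.mem_filter.mp hpT
      have hprime : p.Prime := (Finset.mem_filter.mp hpS).2
      haveI : Fact p.Prime := ⟨hprime⟩
      have h2ne : (2 : ZMod p) ≠ 0 := by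
        intro h
        have hdvd2 : p ∣ 2 := (ZMod.natCast_eq_zero_iff 2 p).mp (by exact_mod_cast h)
        exact hne2 ((Nat.prime_dvd_prime_iff_eq hprime Nat.prime_two).mp hdvd2)
      have hfermat : (2 : ZMod p) ^ (p - 1) = 1 := ZMod.pow_card_sub_one_eq_one h2ne
      obtain ⟨m, hm⟩ := hdvd
      have hzero : ((2 ^ k - 1 : ℕ) : ZMod p) = 0 := by
        have h1 : (1 : ℕ) ≤ 2 ^ k := Nat.one_le_two_pow
        push_cast [h1]
        rw [hm, pow_mul, hfermat, one_pow, sub_self]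
      exact (ZMod.natCast_eq_zero_iff _ p).mp hzero
  have h2k1 : 0 < 2 ^ k - 1 := by
    have : 2 ≤ 2 ^ k := by
      calc 2 = 2 ^ 1 := rfl
        _ ≤ 2 ^ k := Nat.pow_le_pow_right (by norm_num) (by omega)
    omega
  have hRle : R ≤ 2 ^ (k + 1) := by
    have := Nat.le_of_dvd h2k1 hodd
    rw [hRsplit, pow_succ, mul_comm (2 ^ k) 2]
    have h1 : (1 : ℕ) ≤ 2 ^ k := Nat.one_le_two_pow
    omega
  -- positivity
  have hRpos : 0 < R := Finset.prod_pos (fun p hp =>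
    ((Finset.mem_filter.mp ((Finset.mem_filter.mp hp).1)).2).pos)
  have hMYpos : 0 < MY := by
    rw [hMY']
    exact Finset.prod_pos (fun p hp =>
      ((Finset.mem_filter.mp ((Finset.mem_filter.mp hp).1)).2).pos)
  have hPpos : 0 < P := Finset.prod_pos (fun p hp => ((Finset.mem_filter.mp hp).2).pos)
  -- lower bound on log P
  have hfloor : ⌊(Y : ℝ)⌋₊ = Y := Nat.floor_natCast Y
  have hlogP : 0.73 * (Y : ℝ) ≤ Real.log P := by
    have h := hPNT (Y : ℝ) (by exact_mod_cast hY37)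
    rw [hfloor] at h
    have hrw : Real.log (P : ℝ) = ∑ p ∈ S, Real.log p := by
      rw [hP, Nat.cast_prod, Real.log_prod]
      intro p hp
      have : p.Prime := (Finset.mem_filter.mp hp).2
      exact_mod_cast this.ne_zero
    rw [hrw]
    exact h
  have hlog2pos : (0 : ℝ) < Real.log 2 := Real.log_pos one_lt_two
  have hlogbP : c ≤ Real.logb 2 P := by
    have h1 : (Y : ℝ) ≤ Real.logb 2 P := by
      rw [Real.logb, le_div_iff₀ hlog2pos]
      have hlog2 : Real.log 2 < 0.6931472 := by
        have := Real.log_two_lt_d9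
        linarith
      have hYpos : (0 : ℝ) ≤ (Y : ℝ) := Nat.cast_nonneg Y
      nlinarith
    linarith
  have hlogbR : Real.logb 2 R ≤ (k : ℝ) + 1 := by
    have h1 : Real.logb 2 R ≤ Real.logb 2 ((2 : ℝ) ^ (k + 1)) := by
      exact Real.logb_le_logb_of_le one_lt_two (by exact_mod_cast hRpos)
        (by exact_mod_cast hRle)
    rw [Real.logb_pow, Real.logb_self_eq_one one_lt_two] at h1
    push_cast at h1 ⊢
    linarith
  have hPMR : (P : ℝ) = (R : ℝ) * MY := by exact_mod_cast hsplit.symm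
  have hmul : Real.logb 2 P = Real.logb 2 R + Real.logb 2 MY := by
    rw [hPMR, Real.logb_mul (by positivity) (by positivity)]
  linarith
end
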